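/- Let p > 1, ν ≥ 1, μ > 1, and define f : ℤ × ℝ → ℝ by f(k,t) = (1+|k|)^{−μ} |t|^{p−2} t · ln(1 + |t|^ν). Then (a) for each fixed k ∈ ℤ, lim_{|t|→+∞} f(k,t)t/|t|^p = +∞, so condition (H4) holds; but (b) the convergence is not uniform in k: it is false that for every M > 0 there exists T > 0 such that f(k,t)t/|t|^p ≥ M for all k ∈ ℤ and all |t| ≥ T; hence condition (H4′) fails. -/

import Mathlib

open Real Set Filter

/-! For `t ≠ 0` the quotient `f(k,t)t/|t|^p` equals `(1+|k|)^{-μ} ln(1 + |t|^ν)`.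
For fixed `k` this tends to `+∞` as `|t| → ∞`; for fixed `t = T` it tends to `0` as `k → ∞`,
because `μ > 0`, so no single threshold `T` works for `M = 1` and all `k`. -/

lemma abs_rpow_sub_two_mul_self_mul_self {t : ℝ} (ht : t ≠ 0) (p : ℝ) :
    |t| ^ (p - 2) * t * t = |t| ^ p := by
  have h0 : 0 < |t| := abs_pos.mpr ht
  rw [mul_assoc, ← abs_mul_abs_self, ← pow_two, ← rpow_natCast, ← rpow_add h0]
  norm_num

lemma mul_abs_rpow_sub_two_mul_mul_div_abs_rpow {t : ℝ} (ht : t ≠ 0) (p c g : ℝ) :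
    c * (|t| ^ (p - 2) * t * g) * t / |t| ^ p = c * g := by
  have hp : |t| ^ p ≠ 0 := (rpow_pos_of_pos (abs_pos.mpr ht) p).ne'
  rw [div_eq_iff hp, ← abs_rpow_sub_two_mul_self_mul_self ht p]
  ring

lemma tendsto_log_one_add_abs_rpow_cocompact {ν : ℝ} (hν : 0 < ν) :
    Tendsto (fun t : ℝ => Real.log (1 + |t| ^ ν)) (cocompact ℝ) atTop :=
  tendsto_log_atTop.comp <| tendsto_atTop_add_const_left _ _ <|
    (tendsto_rpow_atTop hν).comp (tendsto_norm_cocompact_atTop (E := ℝ))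

lemma tendsto_one_add_abs_intCast_rpow_neg {μ : ℝ} (hμ : 0 < μ) :
    Tendsto (fun k : ℤ => ((1 : ℝ) + |(k : ℝ)|) ^ (-μ)) atTop (nhds 0) :=
  (tendsto_rpow_neg_atTop hμ).comp <| tendsto_atTop_add_const_left _ _ <|
    tendsto_abs_atTop_atTop.comp tendsto_intCast_atTop_atTop

theorem example_satisfies_H4_not_H4'_general
    (p ν μ : ℝ) (hν : 1 ≤ ν) (hμ : 1 < μ)
    (f : ℤ → ℝ → ℝ)
    (hf : ∀ k t, f k t =
      ((1 : ℝ) + |(k : ℝ)|) ^ (-μ) * (|t| ^ (p - 2) * t * Real.log (1 + |t| ^ ν))) :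
    (∀ k : ℤ, Tendsto (fun t : ℝ => f k t * t / |t| ^ p) (cocompact ℝ) atTop) ∧
    ¬ (∀ M : ℝ, 0 < M → ∃ T : ℝ, 0 < T ∧ ∀ k : ℤ, ∀ t : ℝ, T ≤ |t| →
        M ≤ f k t * t / |t| ^ p) := by
  have quotient_eq : ∀ k t, t ≠ 0 →
      f k t * t / |t| ^ p = ((1 : ℝ) + |(k : ℝ)|) ^ (-μ) * Real.log (1 + |t| ^ ν) :=
    fun k t ht => by rw [hf, mul_abs_rpow_sub_two_mul_mul_div_abs_rpow ht]
  constructor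
  · intro k
    have hc : (0 : ℝ) < ((1 : ℝ) + |(k : ℝ)|) ^ (-μ) := rpow_pos_of_pos (by positivity) _
    have hlog := tendsto_log_one_add_abs_rpow_cocompact (ν := ν) (by linarith)
    refine (hlog.const_mul_atTop hc).congr' ?_
    filter_upwards [(isCompact_singleton (x := (0 : ℝ))).compl_mem_cocompact] with t ht
    exact (quotient_eq k t ht).symm
  · intro h
    obtain ⟨T, hT, hAll⟩ := h 1 one_pos
    have small :
        ∀ᶠ k : ℤ in atTop, ((1 : ℝ) + |(k : ℝ)|) ^ (-μ) * Real.log (1 + T ^ ν) < 1 := by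
      have := (tendsto_one_add_abs_intCast_rpow_neg (μ := μ) (by linarith)).mul_const
        (Real.log (1 + T ^ ν))
      rw [zero_mul] at this
      exact this.eventually (gt_mem_nhds one_pos)
    obtain ⟨k, hk⟩ := small.exists
    have hle := hAll k T (le_abs_self T)
    rw [quotient_eq k T hT.ne', abs_of_pos hT] at hle
    linarith

/-- Kong's example `f(k,t) = (1+|k|)^{−μ} |t|^{p−2} t · ln(1+|t|^ν)` satisfies
(H4) (the limit `f(k,t)t/|t|^p → +∞` holds for each fixed `k`), but not (H4′)
(the limit is not uniform in `k`). -/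
theorem example_satisfies_H4_not_H4'
    (p ν μ : ℝ) (hp : 1 < p) (hν : 1 ≤ ν) (hμ : 1 < μ)
    (f : ℤ → ℝ → ℝ)
    (hf : ∀ k t, f k t =
      ((1 : ℝ) + |(k : ℝ)|) ^ (-μ) * (|t| ^ (p - 2) * t * Real.log (1 + |t| ^ ν))) :
    (∀ k : ℤ, Tendsto (fun t : ℝ => f k t * t / |t| ^ p) (cocompact ℝ) atTop) ∧
    ¬ (∀ M : ℝ, 0 < M → ∃ T : ℝ, 0 < T ∧ ∀ k : ℤ, ∀ t : ℝ, T ≤ |t| →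
        M ≤ f k t * t / |t| ^ p) :=
  example_satisfies_H4_not_H4'_general p ν μ hν hμ f hf
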